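/- arXiv:2511.02942 — 2 statements merged into one kernel-verified Lean document; each statement's English description precedes it below -/
import Mathlib

section
/- The Extension Lemma for LEI: if φ ⊬ ψ in the Hilbert system LEI, then there exists a consistent prime LEI-theory T such that φ ∈ T and ψ ∉ T. -/
/-- Formulas of the logic LEI: atoms, ¬, ∧, → and the ignorance operator I. -/
inductive Form where
  | atom : ℕ → Form
  | neg : Form → Form
  | conj : Form → Form → Form
  | impl : Form → Form → Form
  | ig : Form → Form

/-- Defined disjunction: φ ∨ ψ := ¬(¬φ ∧ ¬ψ). -/
def Form.disj (φ ψ : Form) : Form := .neg (.conj (.neg φ) (.neg ψ))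

/-- Defined biconditional: φ ↔ ψ := (φ → ψ) ∧ (ψ → φ). -/
def Form.biim (φ ψ : Form) : Form := .conj (.impl φ ψ) (.impl ψ φ)

/-- Hilbert-style derivability for LEI from a set of premises Γ: the axiom schemes
A1–A14 of Lt2, the modal axioms Iφ → φ, (Iφ ∧ Iψ) → I(φ ∨ ψ), Iφ ∨ ¬Iφ, the rules
Adj, MP, dMP, dTrans, dECQ, and the rule IR (applicable only to theorems). -/
inductive Deriv : Set Form → Form → Prop where
  | mem {Γ : Set Form} {φ : Form} : φ ∈ Γ → Deriv Γ φ
  | a1 {Γ} (φ ψ : Form) : Deriv Γ (.impl (.conj φ ψ) φ)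
  | a2 {Γ} (φ ψ : Form) : Deriv Γ (.impl (.conj φ ψ) ψ)
  | a3 {Γ} (φ ψ χ : Form) :
      Deriv Γ (.impl (.conj (.impl φ ψ) (.impl φ χ)) (.impl φ (.conj ψ χ)))
  | a4 {Γ} (φ ψ : Form) : Deriv Γ (.impl φ (φ.disj ψ))
  | a5 {Γ} (φ ψ : Form) : Deriv Γ (.impl ψ (φ.disj ψ))
  | a6 {Γ} (φ ψ χ : Form) :
      Deriv Γ (.impl (.conj (.impl φ χ) (.impl ψ χ)) (.impl (φ.disj ψ) χ))
  | a7 {Γ} (φ ψ χ : Form) :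
      Deriv Γ (.impl (.conj φ (ψ.disj χ)) ((Form.conj φ ψ).disj (Form.conj φ χ)))
  | a8 {Γ} (φ ψ : Form) : Deriv Γ ((Form.neg (φ.disj ψ)).biim (.conj (.neg φ) (.neg ψ)))
  | a9 {Γ} (φ ψ : Form) : Deriv Γ ((Form.neg (.conj φ ψ)).biim ((Form.neg φ).disj (Form.neg ψ)))
  | a10 {Γ} (φ : Form) : Deriv Γ (φ.biim (.neg (.neg φ)))
  | a11 {Γ} (φ ψ : Form) : Deriv Γ (.impl (.conj (.impl φ ψ) φ) ψ)
  | a12 {Γ} (φ ψ : Form) : Deriv Γ (.impl ψ (.impl φ ψ))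
  | a13 {Γ} (φ ψ : Form) : Deriv Γ (φ.disj (.impl φ ψ))
  | a14 {Γ} (φ ψ : Form) : Deriv Γ (.impl φ (ψ.disj (.neg (.impl φ ψ))))
  | fact {Γ} (φ : Form) : Deriv Γ (.impl (.ig φ) φ)
  | iconj {Γ} (φ ψ : Form) : Deriv Γ (.impl (.conj (.ig φ) (.ig ψ)) (.ig (φ.disj ψ)))
  | emI {Γ} (φ : Form) : Deriv Γ ((Form.ig φ).disj (.neg (.ig φ)))
  | adj {Γ} {φ ψ : Form} : Deriv Γ φ → Deriv Γ ψ → Deriv Γ (.conj φ ψ)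
  | mp {Γ} {φ ψ : Form} : Deriv Γ (.impl φ ψ) → Deriv Γ φ → Deriv Γ ψ
  | dmp {Γ} {χ φ ψ : Form} :
      Deriv Γ (χ.disj (.impl φ ψ)) → Deriv Γ (χ.disj φ) → Deriv Γ (χ.disj ψ)
  | dtrans {Γ} {ρ φ ψ χ : Form} :
      Deriv Γ (ρ.disj (.impl φ ψ)) → Deriv Γ (ρ.disj (.impl ψ χ)) →
        Deriv Γ (ρ.disj (.impl φ χ))
  | decq {Γ} {χ φ : Form} (ψ : Form) :
      Deriv Γ (χ.disj (.conj φ (.neg φ))) → Deriv Γ (χ.disj ψ)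
  | ir {Γ} {φ ψ : Form} :
      Deriv ∅ (.impl φ ψ) → Deriv Γ (.impl φ (.impl (.ig ψ) (.ig φ)))

/-- A LEI-theory: a nontrivial set of formulas closed under LEI-derivability and
under the rule "if φ ∈ T or ψ ∈ T then φ ∨ ψ ∈ T". -/
def IsTheory (T : Set Form) : Prop :=
  (∃ φ, φ ∉ T) ∧ (∀ φ, Deriv T φ → φ ∈ T) ∧
    ∀ φ ψ : Form, (φ ∈ T ∨ ψ ∈ T) → φ.disj ψ ∈ T

/-- A prime theory: φ ∨ ψ ∈ T implies φ ∈ T or ψ ∈ T. -/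
def IsPrime (T : Set Form) : Prop := ∀ φ ψ : Form, φ.disj ψ ∈ T → φ ∈ T ∨ ψ ∈ T

/-- A consistent theory: no formula belongs to T together with its negation. -/
def IsConsistent (T : Set Form) : Prop := ∀ φ : Form, ¬(φ ∈ T ∧ Form.neg φ ∈ T)


/-! ### Auxiliary development -/

section Aux

open Form

/-- Substitution/cut for derivability. -/
theorem Deriv.subst' {Δ : Set Form} {a : Form} (h : Deriv Δ a) :
    ∀ Γ : Set Form, (∀ x ∈ Δ, Deriv Γ x) → Deriv Γ a := by
  induction h with
  | mem h => exact fun Γ hs => hs _ h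
  | a1 φ ψ => exact fun Γ _ => .a1 φ ψ
  | a2 φ ψ => exact fun Γ _ => .a2 φ ψ
  | a3 φ ψ χ => exact fun Γ _ => .a3 φ ψ χ
  | a4 φ ψ => exact fun Γ _ => .a4 φ ψ
  | a5 φ ψ => exact fun Γ _ => .a5 φ ψ
  | a6 φ ψ χ => exact fun Γ _ => .a6 φ ψ χ
  | a7 φ ψ χ => exact fun Γ _ => .a7 φ ψ χ
  | a8 φ ψ => exact fun Γ _ => .a8 φ ψ
  | a9 φ ψ => exact fun Γ _ => .a9 φ ψ
  | a10 φ => exact fun Γ _ => .a10 φ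
  | a11 φ ψ => exact fun Γ _ => .a11 φ ψ
  | a12 φ ψ => exact fun Γ _ => .a12 φ ψ
  | a13 φ ψ => exact fun Γ _ => .a13 φ ψ
  | a14 φ ψ => exact fun Γ _ => .a14 φ ψ
  | fact φ => exact fun Γ _ => .fact φ
  | iconj φ ψ => exact fun Γ _ => .iconj φ ψ
  | emI φ => exact fun Γ _ => .emI φ
  | adj _ _ ih1 ih2 => exact fun Γ hs => .adj (ih1 Γ hs) (ih2 Γ hs)
  | mp _ _ ih1 ih2 => exact fun Γ hs => .mp (ih1 Γ hs) (ih2 Γ hs)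
  | dmp _ _ ih1 ih2 => exact fun Γ hs => .dmp (ih1 Γ hs) (ih2 Γ hs)
  | dtrans _ _ ih1 ih2 => exact fun Γ hs => .dtrans (ih1 Γ hs) (ih2 Γ hs)
  | decq ψ _ ih => exact fun Γ hs => .decq ψ (ih Γ hs)
  | ir h _ => exact fun Γ _ => .ir h

theorem Deriv.mono {Γ Δ : Set Form} {a : Form} (h : Deriv Γ a) (hs : Γ ⊆ Δ) :
    Deriv Δ a :=
  h.subst' Δ (fun _ hx => .mem (hs hx))

theorem dCut {Γ : Set Form} {a b : Form} (hb : Deriv Γ b)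
    (h : Deriv (insert b Γ) a) : Deriv Γ a := by
  refine h.subst' Γ (fun x hx => ?_)
  rcases Set.mem_insert_iff.mp hx with rfl | hx
  · exact hb
  · exact .mem hx

/-! Basic derived rules. -/

theorem dAndE1 {Γ : Set Form} {a b : Form} (h : Deriv Γ (a.conj b)) : Deriv Γ a :=
  .mp (.a1 a b) h

theorem dAndE2 {Γ : Set Form} {a b : Form} (h : Deriv Γ (a.conj b)) : Deriv Γ b :=
  .mp (.a2 a b) h

theorem dOr1 {Γ : Set Form} {a : Form} (b : Form) (h : Deriv Γ a) :
    Deriv Γ (a.disj b) := .mp (.a4 a b) h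

theorem dOr2 {Γ : Set Form} {b : Form} (a : Form) (h : Deriv Γ b) :
    Deriv Γ (a.disj b) := .mp (.a5 a b) h

theorem dOrImp {Γ : Set Form} {a b c : Form} (h1 : Deriv Γ (a.impl c))
    (h2 : Deriv Γ (b.impl c)) : Deriv Γ ((a.disj b).impl c) :=
  .mp (.a6 a b c) (.adj h1 h2)

theorem dCases {Γ : Set Form} {a b c : Form} (h : Deriv Γ (a.disj b))
    (h1 : Deriv Γ (a.impl c)) (h2 : Deriv Γ (b.impl c)) : Deriv Γ c :=
  .mp (dOrImp h1 h2) h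

/-- Identity is derivable. -/
theorem dId {Γ : Set Form} (a : Form) : Deriv Γ (a.impl a) := by
  have h1 : Deriv Γ (a.disj (a.impl a)) := .a13 a a
  have h2 : Deriv Γ ((a.impl a).impl ((a.impl a).neg.neg)) := dAndE1 (.a10 (a.impl a))
  have h3 : Deriv Γ (a.disj ((a.impl a).impl ((a.impl a).neg.neg))) := dOr2 a h2
  have h4 : Deriv Γ (a.disj ((a.impl a).neg.neg)) := .dmp h3 h1
  have h5 : Deriv Γ (a.impl (a.impl a)) := .a12 a a
  have h6 : Deriv Γ (((a.impl a).neg.neg).impl (a.impl a)) := dAndE2 (.a10 (a.impl a))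
  exact dCases h4 h5 h6

theorem dContr {Γ : Set Form} {a : Form} (h : Deriv Γ (a.disj a)) : Deriv Γ a :=
  dCases h (dId a) (dId a)

theorem dComm {Γ : Set Form} {a b : Form} (h : Deriv Γ (a.disj b)) :
    Deriv Γ (b.disj a) :=
  dCases h (.a5 b a) (.a4 b a)

theorem dTrans {Γ : Set Form} {a b c : Form} (h1 : Deriv Γ (a.impl b))
    (h2 : Deriv Γ (b.impl c)) : Deriv Γ (a.impl c) :=
  dContr (.dtrans (dOr2 (a.impl c) h1) (dOr2 (a.impl c) h2))

theorem dConjComm {Γ : Set Form} (a b : Form) : Deriv Γ ((a.conj b).impl (b.conj a)) :=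
  .mp (.a3 (a.conj b) b a) (.adj (.a2 a b) (.a1 a b))

theorem dRotI {Γ : Set Form} (x y z : Form) :
    Deriv Γ (((x.disj y).disj z).impl ((x.disj z).disj y)) :=
  dOrImp
    (dOrImp (dTrans (.a4 x z) (.a4 (x.disj z) y)) (.a5 (x.disj z) y))
    (dTrans (.a5 x z) (.a4 (x.disj z) y))

theorem dRot {Γ : Set Form} {x y z : Form} (h : Deriv Γ ((x.disj y).disj z)) :
    Deriv Γ ((x.disj z).disj y) := .mp (dRotI x y z) h

theorem dAdjOr {Γ : Set Form} {r a b : Form} (h1 : Deriv Γ (r.disj a))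
    (h2 : Deriv Γ (r.disj b)) : Deriv Γ (r.disj (a.conj b)) := by
  have s1 : Deriv Γ (((r.disj a).conj r).disj ((r.disj a).conj b)) :=
    .mp (.a7 (r.disj a) r b) (.adj h1 h2)
  have e1 : Deriv Γ (((r.disj a).conj r).impl (r.disj (a.conj b))) :=
    dTrans (.a2 (r.disj a) r) (.a4 r (a.conj b))
  have e2 : Deriv Γ (((r.disj a).conj b).impl (r.disj (a.conj b))) :=
    dTrans (dConjComm (r.disj a) b)
      (dTrans (.a7 b r a)
        (dOrImp (dTrans (.a2 b r) (.a4 r (a.conj b)))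
          (dTrans (dConjComm b a) (.a5 r (a.conj b)))))
  exact dCases s1 e1 e2

/-- Disjunctive deduction theorem. -/
theorem Deriv.ddt {Δ : Set Form} {a : Form} (h : Deriv Δ a) :
    ∀ (Γ : Set Form) (χ δ : Form), Δ = insert χ Γ →
      Deriv (insert (χ.disj δ) Γ) (a.disj δ) := by
  induction h with
  | mem h =>
    intro Γ χ δ hEq
    subst hEq
    rcases Set.mem_insert_iff.mp h with rfl | h
    · exact .mem (Set.mem_insert _ _)
    · exact dOr1 _ (.mem (Set.mem_insert_of_mem _ h))
  | a1 φ ψ => exact fun Γ χ δ _ => dOr1 _ (.a1 φ ψ)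
  | a2 φ ψ => exact fun Γ χ δ _ => dOr1 _ (.a2 φ ψ)
  | a3 φ ψ χ' => exact fun Γ χ δ _ => dOr1 _ (.a3 φ ψ χ')
  | a4 φ ψ => exact fun Γ χ δ _ => dOr1 _ (.a4 φ ψ)
  | a5 φ ψ => exact fun Γ χ δ _ => dOr1 _ (.a5 φ ψ)
  | a6 φ ψ χ' => exact fun Γ χ δ _ => dOr1 _ (.a6 φ ψ χ')
  | a7 φ ψ χ' => exact fun Γ χ δ _ => dOr1 _ (.a7 φ ψ χ')
  | a8 φ ψ => exact fun Γ χ δ _ => dOr1 _ (.a8 φ ψ)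
  | a9 φ ψ => exact fun Γ χ δ _ => dOr1 _ (.a9 φ ψ)
  | a10 φ => exact fun Γ χ δ _ => dOr1 _ (.a10 φ)
  | a11 φ ψ => exact fun Γ χ δ _ => dOr1 _ (.a11 φ ψ)
  | a12 φ ψ => exact fun Γ χ δ _ => dOr1 _ (.a12 φ ψ)
  | a13 φ ψ => exact fun Γ χ δ _ => dOr1 _ (.a13 φ ψ)
  | a14 φ ψ => exact fun Γ χ δ _ => dOr1 _ (.a14 φ ψ)
  | fact φ => exact fun Γ χ δ _ => dOr1 _ (.fact φ)
  | iconj φ ψ => exact fun Γ χ δ _ => dOr1 _ (.iconj φ ψ)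
  | emI φ => exact fun Γ χ δ _ => dOr1 _ (.emI φ)
  | adj _ _ ih1 ih2 =>
    exact fun Γ χ δ hEq =>
      dComm (dAdjOr (dComm (ih1 Γ χ δ hEq)) (dComm (ih2 Γ χ δ hEq)))
  | mp _ _ ih1 ih2 =>
    exact fun Γ χ δ hEq =>
      dComm (.dmp (dComm (ih1 Γ χ δ hEq)) (dComm (ih2 Γ χ δ hEq)))
  | dmp _ _ ih1 ih2 =>
    exact fun Γ χ δ hEq =>
      dRot (.dmp (dRot (ih1 Γ χ δ hEq)) (dRot (ih2 Γ χ δ hEq)))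
  | dtrans _ _ ih1 ih2 =>
    exact fun Γ χ δ hEq =>
      dRot (.dtrans (dRot (ih1 Γ χ δ hEq)) (dRot (ih2 Γ χ δ hEq)))
  | decq ψ _ ih =>
    exact fun Γ χ δ hEq => dRot (.decq ψ (dRot (ih Γ χ δ hEq)))
  | ir h _ => exact fun Γ χ δ _ => dOr1 _ (.ir h)

/-- Stage decomposition for derivations from a countable increasing union. -/
theorem Deriv.toStage {Δ : Set Form} {a : Form} (h : Deriv Δ a) :
    ∀ C : ℕ → Set Form, (∀ m n, m ≤ n → C m ⊆ C n) → Δ ⊆ (⋃ n, C n) →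
      ∃ n, Deriv (C n) a := by
  induction h with
  | mem h =>
    intro C _ hsub
    obtain ⟨n, hn⟩ := Set.mem_iUnion.mp (hsub h)
    exact ⟨n, .mem hn⟩
  | a1 φ ψ => exact fun C _ _ => ⟨0, .a1 φ ψ⟩
  | a2 φ ψ => exact fun C _ _ => ⟨0, .a2 φ ψ⟩
  | a3 φ ψ χ => exact fun C _ _ => ⟨0, .a3 φ ψ χ⟩
  | a4 φ ψ => exact fun C _ _ => ⟨0, .a4 φ ψ⟩
  | a5 φ ψ => exact fun C _ _ => ⟨0, .a5 φ ψ⟩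
  | a6 φ ψ χ => exact fun C _ _ => ⟨0, .a6 φ ψ χ⟩
  | a7 φ ψ χ => exact fun C _ _ => ⟨0, .a7 φ ψ χ⟩
  | a8 φ ψ => exact fun C _ _ => ⟨0, .a8 φ ψ⟩
  | a9 φ ψ => exact fun C _ _ => ⟨0, .a9 φ ψ⟩
  | a10 φ => exact fun C _ _ => ⟨0, .a10 φ⟩
  | a11 φ ψ => exact fun C _ _ => ⟨0, .a11 φ ψ⟩
  | a12 φ ψ => exact fun C _ _ => ⟨0, .a12 φ ψ⟩
  | a13 φ ψ => exact fun C _ _ => ⟨0, .a13 φ ψ⟩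
  | a14 φ ψ => exact fun C _ _ => ⟨0, .a14 φ ψ⟩
  | fact φ => exact fun C _ _ => ⟨0, .fact φ⟩
  | iconj φ ψ => exact fun C _ _ => ⟨0, .iconj φ ψ⟩
  | emI φ => exact fun C _ _ => ⟨0, .emI φ⟩
  | adj _ _ ih1 ih2 =>
    intro C hmono hsub
    obtain ⟨n1, h1⟩ := ih1 C hmono hsub
    obtain ⟨n2, h2⟩ := ih2 C hmono hsub
    exact ⟨max n1 n2, .adj (h1.mono (hmono _ _ (le_max_left n1 n2)))
      (h2.mono (hmono _ _ (le_max_right n1 n2)))⟩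
  | mp _ _ ih1 ih2 =>
    intro C hmono hsub
    obtain ⟨n1, h1⟩ := ih1 C hmono hsub
    obtain ⟨n2, h2⟩ := ih2 C hmono hsub
    exact ⟨max n1 n2, .mp (h1.mono (hmono _ _ (le_max_left n1 n2)))
      (h2.mono (hmono _ _ (le_max_right n1 n2)))⟩
  | dmp _ _ ih1 ih2 =>
    intro C hmono hsub
    obtain ⟨n1, h1⟩ := ih1 C hmono hsub
    obtain ⟨n2, h2⟩ := ih2 C hmono hsub
    exact ⟨max n1 n2, .dmp (h1.mono (hmono _ _ (le_max_left n1 n2)))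
      (h2.mono (hmono _ _ (le_max_right n1 n2)))⟩
  | dtrans _ _ ih1 ih2 =>
    intro C hmono hsub
    obtain ⟨n1, h1⟩ := ih1 C hmono hsub
    obtain ⟨n2, h2⟩ := ih2 C hmono hsub
    exact ⟨max n1 n2, .dtrans (h1.mono (hmono _ _ (le_max_left n1 n2)))
      (h2.mono (hmono _ _ (le_max_right n1 n2)))⟩
  | decq ψ _ ih =>
    intro C hmono hsub
    obtain ⟨n, hn⟩ := ih C hmono hsub
    exact ⟨n, .decq ψ hn⟩
  | ir h _ => exact fun C _ _ => ⟨0, .ir h⟩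

/-! Countability of formulas. -/

def Form.enc : Form → ℕ
  | .atom n => Nat.pair 0 n
  | .neg f => Nat.pair 1 f.enc
  | .conj f g => Nat.pair 2 (Nat.pair f.enc g.enc)
  | .impl f g => Nat.pair 3 (Nat.pair f.enc g.enc)
  | .ig f => Nat.pair 4 f.enc

theorem Form.enc_inj : Function.Injective Form.enc := by
  intro a
  induction a with
  | atom n =>
    intro b hb; cases b <;> simp [Form.enc, Nat.pair_eq_pair] at hb
    rw [hb]
  | neg f ih =>
    intro b hb; cases b <;> simp [Form.enc, Nat.pair_eq_pair] at hb
    rw [ih hb]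
  | conj f g ihf ihg =>
    intro b hb; cases b <;> simp [Form.enc, Nat.pair_eq_pair] at hb
    rw [ihf hb.1, ihg hb.2]
  | impl f g ihf ihg =>
    intro b hb; cases b <;> simp [Form.enc, Nat.pair_eq_pair] at hb
    rw [ihf hb.1, ihg hb.2]
  | ig f ih =>
    intro b hb; cases b <;> simp [Form.enc, Nat.pair_eq_pair] at hb
    rw [ih hb]

instance : Countable Form := ⟨⟨Form.enc, Form.enc_inj⟩⟩
instance : Nonempty Form := ⟨.atom 0⟩

/-! The Lindenbaum chain. -/

open Classical in
noncomputable def chain (φ ψ : Form) (g : ℕ → Form) : ℕ → Set Form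
  | 0 => {φ}
  | n + 1 =>
    if Deriv (insert (g n) (chain φ ψ g n)) ψ then chain φ ψ g n
    else insert (g n) (chain φ ψ g n)

theorem chain_subset_succ (φ ψ : Form) (g : ℕ → Form) (n : ℕ) :
    chain φ ψ g n ⊆ chain φ ψ g (n + 1) := by
  simp only [chain]
  split
  · exact subset_rfl
  · exact Set.subset_insert _ _

theorem chain_mono (φ ψ : Form) (g : ℕ → Form) :
    ∀ m n, m ≤ n → chain φ ψ g m ⊆ chain φ ψ g n := by
  intro m n hmn
  induction hmn with
  | refl => exact subset_rfl
  | step _ ih => exact ih.trans (chain_subset_succ φ ψ g _)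

theorem chain_inv (φ ψ : Form) (g : ℕ → Form) (h : ¬ Deriv {φ} ψ) :
    ∀ n, ¬ Deriv (chain φ ψ g n) ψ := by
  intro n
  induction n with
  | zero => exact h
  | succ n ih =>
    simp only [chain]
    split
    · exact ih
    · next hc => exact hc

end Aux

/-- The Extension Lemma for LEI: if φ ⊬ ψ then there is a consistent prime LEI-theory T
with φ ∈ T and ψ ∉ T. -/
theorem stmt10 (φ ψ : Form) (h : ¬ Deriv {φ} ψ) :
    ∃ T : Set Form, IsTheory T ∧ IsPrime T ∧ IsConsistent T ∧ φ ∈ T ∧ ψ ∉ T := by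
  classical
  obtain ⟨g, hg⟩ := exists_surjective_nat Form
  set T : Set Form := ⋃ n, chain φ ψ g n with hT
  have cmono := chain_mono φ ψ g
  have cinv := chain_inv φ ψ g h
  have hsub : ∀ n, chain φ ψ g n ⊆ T := fun n => Set.subset_iUnion (chain φ ψ g) n
  have hstage : ∀ {a : Form}, Deriv T a → ∃ n, Deriv (chain φ ψ g n) a := by
    intro a ha
    exact ha.toStage (chain φ ψ g) cmono (by rw [hT])
  have hnotpsi : ¬ Deriv T ψ := by
    intro hd
    obtain ⟨n, hn⟩ := hstage hd
    exact cinv n hn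
  have hpsi_not : ψ ∉ T := fun hmem => hnotpsi (.mem hmem)
  -- if a is not in T then adding it at its stage derives ψ
  have hkey : ∀ {a : Form} {n : ℕ}, a ∉ T → g n = a →
      Deriv (insert a (chain φ ψ g n)) ψ := by
    intro a n ha hgn
    by_contra hd
    apply ha
    refine Set.mem_iUnion.mpr ⟨n + 1, ?_⟩
    have hne : ¬ Deriv (insert (g n) (chain φ ψ g n)) ψ := by rwa [hgn]
    simp only [chain]
    rw [if_neg hne, hgn]
    exact Set.mem_insert _ _
  have hclosed : ∀ a, Deriv T a → a ∈ T := by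
    intro a hd
    by_contra ha
    obtain ⟨m, hm⟩ := hg a
    obtain ⟨n, hn⟩ := hstage hd
    have h1 : Deriv (insert a (chain φ ψ g (max m n))) ψ :=
      (hkey ha hm).mono (Set.insert_subset_insert (cmono _ _ (le_max_left m n)))
    have h2 : Deriv (chain φ ψ g (max m n)) a := hn.mono (cmono _ _ (le_max_right m n))
    exact cinv (max m n) (dCut h2 h1)
  have hprime : IsPrime T := by
    intro a b hab
    by_contra hcon
    push_neg at hcon
    obtain ⟨ha, hb⟩ := hcon
    obtain ⟨ma, hma⟩ := hg a
    obtain ⟨mb, hmb⟩ := hg b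
    obtain ⟨j, hj⟩ := Set.mem_iUnion.mp hab
    set N := max (max ma mb) j with hN
    have h1 : Deriv (insert a (chain φ ψ g N)) ψ :=
      (hkey ha hma).mono (Set.insert_subset_insert
        (cmono _ _ ((le_max_left ma mb).trans (le_max_left _ j))))
    have h2 : Deriv (insert b (chain φ ψ g N)) ψ :=
      (hkey hb hmb).mono (Set.insert_subset_insert
        (cmono _ _ ((le_max_right ma mb).trans (le_max_left _ j))))
    have habN : a.disj b ∈ chain φ ψ g N := cmono j N (le_max_right _ j) hj
    have h3 : Deriv (insert (a.disj b) (chain φ ψ g N)) (ψ.disj b) :=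
      h1.ddt _ a b rfl
    rw [Set.insert_eq_self.mpr habN] at h3
    have h5 : Deriv (chain φ ψ g N) (b.disj ψ) := dComm h3
    have h6 : Deriv (insert (b.disj ψ) (chain φ ψ g N)) (ψ.disj ψ) :=
      h2.ddt _ b ψ rfl
    have h7 : Deriv (chain φ ψ g N) (ψ.disj ψ) := dCut h5 h6
    exact cinv N (dContr h7)
  have hcons : IsConsistent T := by
    rintro χ ⟨h1, h2⟩
    have hd : Deriv T (χ.conj χ.neg) := .adj (.mem h1) (.mem h2)
    have hd2 : Deriv T (ψ.disj (χ.conj χ.neg)) := dOr2 ψ hd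
    exact hnotpsi (dContr (Deriv.decq ψ hd2))
  refine ⟨T, ⟨⟨ψ, hpsi_not⟩, hclosed, ?_⟩, hprime, hcons, ?_, hpsi_not⟩
  · intro a b hab
    refine hclosed _ ?_
    rcases hab with hmem | hmem
    · exact dOr1 b (.mem hmem)
    · exact dOr2 a (.mem hmem)
  · exact Set.mem_iUnion.mpr ⟨0, rfl⟩
end

section
/- The deduction theorem holds for LEI: for any set of formulas Γ and formulas φ, ψ, we have Γ ∪ {φ} ⊢ ψ if and only if Γ ⊢ φ → ψ. -/
namespace LEI

open Form

/-- Monotonicity of derivability in the premise set. -/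
theorem mono : ∀ {Γ φ}, Deriv Γ φ → ∀ {Δ}, Γ ⊆ Δ → Deriv Δ φ := by
  intro Γ φ d
  induction d with
  | mem h => exact fun hs => .mem (hs h)
  | a1 φ ψ => exact fun _ => .a1 _ _
  | a2 φ ψ => exact fun _ => .a2 _ _
  | a3 φ ψ χ => exact fun _ => .a3 _ _ _
  | a4 φ ψ => exact fun _ => .a4 _ _
  | a5 φ ψ => exact fun _ => .a5 _ _
  | a6 φ ψ χ => exact fun _ => .a6 _ _ _
  | a7 φ ψ χ => exact fun _ => .a7 _ _ _
  | a8 φ ψ => exact fun _ => .a8 _ _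
  | a9 φ ψ => exact fun _ => .a9 _ _
  | a10 φ => exact fun _ => .a10 _
  | a11 φ ψ => exact fun _ => .a11 _ _
  | a12 φ ψ => exact fun _ => .a12 _ _
  | a13 φ ψ => exact fun _ => .a13 _ _
  | a14 φ ψ => exact fun _ => .a14 _ _
  | fact φ => exact fun _ => .fact _
  | iconj φ ψ => exact fun _ => .iconj _ _
  | emI φ => exact fun _ => .emI _
  | adj h1 h2 ih1 ih2 => exact fun hs => .adj (ih1 hs) (ih2 hs)
  | mp h1 h2 ih1 ih2 => exact fun hs => .mp (ih1 hs) (ih2 hs)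
  | dmp h1 h2 ih1 ih2 => exact fun hs => .dmp (ih1 hs) (ih2 hs)
  | dtrans h1 h2 ih1 ih2 => exact fun hs => .dtrans (ih1 hs) (ih2 hs)
  | decq ψ h ih => exact fun hs => .decq ψ (ih hs)
  | ir h ih => exact fun _ => .ir h

variable {Γ : Set Form} {A B C T θ φ ψ χ ρ α β : Form}

/-- Weakening: from ψ infer φ → ψ. -/
theorem wk (h : Deriv Γ ψ) : Deriv Γ (.impl φ ψ) := .mp (.a12 _ _) h

/-- Right disjunction introduction. -/
theorem orI2 (h : Deriv Γ ψ) : Deriv Γ (χ.disj ψ) := .mp (.a5 _ _) h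

/-- Implication out of a disjunction. -/
theorem orE' (h1 : Deriv Γ (.impl A C)) (h2 : Deriv Γ (.impl B C)) :
    Deriv Γ (.impl (A.disj B) C) := .mp (.a6 _ _ _) (.adj h1 h2)

/-- Disjunction elimination. -/
theorem orE (h1 : Deriv Γ (.impl A C)) (h2 : Deriv Γ (.impl B C))
    (h : Deriv Γ (A.disj B)) : Deriv Γ C := .mp (orE' h1 h2) h

/-- Double negation introduction. -/
theorem dni : Deriv Γ (.impl φ (.neg (.neg φ))) := .mp (.a1 _ _) (.a10 φ)

/-- Double negation elimination. -/
theorem dne : Deriv Γ (.impl (.neg (.neg φ)) φ) := .mp (.a2 _ _) (.a10 φ)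

/-- Identity: φ → φ. -/
theorem idthm : Deriv Γ (.impl φ φ) :=
  have h1 : Deriv Γ (φ.disj (.impl φ φ)) := .a13 φ φ
  have h2 : Deriv Γ (φ.disj (.neg (.neg (.impl φ φ)))) := .dmp (orI2 dni) h1
  orE (.a12 φ φ) dne h2

/-- Transitivity of implication (as a rule). -/
theorem trans' (h1 : Deriv Γ (.impl A B)) (h2 : Deriv Γ (.impl B C)) :
    Deriv Γ (.impl A C) :=
  orE idthm idthm (.dtrans (orI2 h1) (orI2 h2) :
    Deriv Γ ((Form.impl A C).disj (.impl A C)))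

/-- Commutativity of disjunction (as a rule). -/
theorem orComm (h : Deriv Γ (A.disj B)) : Deriv Γ (B.disj A) :=
  orE (.a5 B A) (.a4 B A) h

/-- Associativity of disjunction, one direction. -/
theorem orAssoc1 (h : Deriv Γ (A.disj (B.disj C))) :
    Deriv Γ ((A.disj B).disj C) :=
  orE (trans' (.a4 A B) (.a4 (A.disj B) C))
    (orE' (trans' (.a5 A B) (.a4 (A.disj B) C)) (.a5 (A.disj B) C)) h

/-- Associativity of disjunction, other direction. -/
theorem orAssoc2 (h : Deriv Γ ((A.disj B).disj C)) :
    Deriv Γ (A.disj (B.disj C)) :=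
  orE (orE' (.a4 A (B.disj C)) (trans' (.a4 B C) (.a5 A (B.disj C))))
    (trans' (.a5 B C) (.a5 A (B.disj C))) h

/-- From θ → P infer (θ → T) ∨ P, for any T. -/
theorem toDisj (h : Deriv Γ (.impl θ φ)) (T : Form) :
    Deriv Γ ((Form.impl θ T).disj φ) :=
  .dmp (orI2 h) (orComm (.a13 θ T))

/-- From (θ → T) ∨ T infer θ → T. -/
theorem fromDisj (h : Deriv Γ ((Form.impl θ T).disj T)) : Deriv Γ (.impl θ T) :=
  orE idthm (.a12 θ T) h

/-- Modus ponens under an implication. -/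
theorem mpC (h1 : Deriv Γ (.impl θ (.impl α β))) (h2 : Deriv Γ (.impl θ α)) :
    Deriv Γ (.impl θ β) :=
  fromDisj (.dmp (toDisj h1 β) (toDisj h2 β))

/-- The rule dMP under an implication. -/
theorem dmpC (h1 : Deriv Γ (.impl θ (ρ.disj (.impl α β))))
    (h2 : Deriv Γ (.impl θ (ρ.disj α))) :
    Deriv Γ (.impl θ (ρ.disj β)) :=
  fromDisj (orAssoc2 (.dmp (orAssoc1 (toDisj h1 (ρ.disj β)))
    (orAssoc1 (toDisj h2 (ρ.disj β)))))

/-- The rule dTrans under an implication. -/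
theorem dtransC (h1 : Deriv Γ (.impl θ (ρ.disj (.impl α β))))
    (h2 : Deriv Γ (.impl θ (ρ.disj (.impl β χ)))) :
    Deriv Γ (.impl θ (ρ.disj (.impl α χ))) :=
  fromDisj (orAssoc2 (.dtrans (orAssoc1 (toDisj h1 (ρ.disj (.impl α χ))))
    (orAssoc1 (toDisj h2 (ρ.disj (.impl α χ))))))

/-- The rule dECQ under an implication. -/
theorem decqC (ψ : Form) (h : Deriv Γ (.impl θ (ρ.disj (.conj α (.neg α))))) :
    Deriv Γ (.impl θ (ρ.disj ψ)) :=
  fromDisj (orAssoc2 (.decq ψ (orAssoc1 (toDisj h (ρ.disj ψ)))))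

/-- The hard direction of the deduction theorem, generalized. -/
theorem ded : ∀ {Δ ψ}, Deriv Δ ψ → ∀ Γ φ, Δ ⊆ insert φ Γ →
    Deriv Γ (.impl φ ψ) := by
  intro Δ ψ d
  induction d with
  | mem h =>
    intro Γ φ hs
    rcases (Set.mem_insert_iff.mp (hs h)) with h' | h'
    · exact h' ▸ idthm
    · exact wk (.mem h')
  | a1 φ ψ => exact fun Γ χ _ => wk (.a1 _ _)
  | a2 φ ψ => exact fun Γ χ _ => wk (.a2 _ _)
  | a3 φ ψ χ => exact fun Γ χ' _ => wk (.a3 _ _ _)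
  | a4 φ ψ => exact fun Γ χ _ => wk (.a4 _ _)
  | a5 φ ψ => exact fun Γ χ _ => wk (.a5 _ _)
  | a6 φ ψ χ => exact fun Γ χ' _ => wk (.a6 _ _ _)
  | a7 φ ψ χ => exact fun Γ χ' _ => wk (.a7 _ _ _)
  | a8 φ ψ => exact fun Γ χ _ => wk (.a8 _ _)
  | a9 φ ψ => exact fun Γ χ _ => wk (.a9 _ _)
  | a10 φ => exact fun Γ χ _ => wk (.a10 _)
  | a11 φ ψ => exact fun Γ χ _ => wk (.a11 _ _)
  | a12 φ ψ => exact fun Γ χ _ => wk (.a12 _ _)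
  | a13 φ ψ => exact fun Γ χ _ => wk (.a13 _ _)
  | a14 φ ψ => exact fun Γ χ _ => wk (.a14 _ _)
  | fact φ => exact fun Γ χ _ => wk (.fact _)
  | iconj φ ψ => exact fun Γ χ _ => wk (.iconj _ _)
  | emI φ => exact fun Γ χ _ => wk (.emI _)
  | adj h1 h2 ih1 ih2 =>
    exact fun Γ φ hs => .mp (.a3 _ _ _) (.adj (ih1 Γ φ hs) (ih2 Γ φ hs))
  | mp h1 h2 ih1 ih2 => exact fun Γ φ hs => mpC (ih1 Γ φ hs) (ih2 Γ φ hs)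
  | dmp h1 h2 ih1 ih2 => exact fun Γ φ hs => dmpC (ih1 Γ φ hs) (ih2 Γ φ hs)
  | dtrans h1 h2 ih1 ih2 => exact fun Γ φ hs => dtransC (ih1 Γ φ hs) (ih2 Γ φ hs)
  | decq ψ h ih => exact fun Γ φ hs => decqC ψ (ih Γ φ hs)
  | ir h ih => exact fun Γ φ hs => wk (.ir h)

end LEI

/-- The deduction theorem for LEI: Γ ∪ {φ} ⊢ ψ iff Γ ⊢ φ → ψ. -/
theorem stmt11 (Γ : Set Form) (φ ψ : Form) :
    Deriv (insert φ Γ) ψ ↔ Deriv Γ (.impl φ ψ) := by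
  constructor
  · exact fun h => LEI.ded h Γ φ (subset_refl _)
  · exact fun h => .mp (LEI.mono h (Set.subset_insert φ Γ))
      (.mem (Set.mem_insert φ Γ))
end
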